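/- Let X = E + U - max(U) with E ~ Exp(1) independent of U = (U1, ..., Ud), where X_j = E + U_j - max(U1,...,Ud). Assume each U_j is integrable. Then the causal score s_{i→j} is strictly positive if and only if E[U_i] < E[U_j], provided max_k W1(X_k, E) > 0. -/

import Mathlib

/-!
Since `max U ≥ U_j`, each `X_j = E + U_j - max U` lies below `E` pointwise. For `X ≤ E` the CDF
gap `P(X ≤ t) - P(E ≤ t)` is `P(X ≤ t < E)`, and integrating it over `t` (Tonelli) gives
`W1(X, E) = 𝔼[E - X]`. Hence `W1(X_j, E) = 𝔼[max U] - 𝔼[U_j]`, and the sign of the score is that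
of `𝔼[U_j] - 𝔼[U_i]`.
-/

open MeasureTheory ProbabilityTheory

/-- The 1-Wasserstein distance between the CDFs of two real random variables. -/
noncomputable def W1 {Ω : Type*} [MeasurableSpace Ω] (μ : Measure Ω) (A B : Ω → ℝ) : ℝ :=
  ∫ t : ℝ, |(μ {ω | A ω ≤ t}).toReal - (μ {ω | B ω ≤ t}).toReal|

section
variable {Ω : Type*} [MeasurableSpace Ω] {μ : Measure Ω} {X E : Ω → ℝ}

theorem measurableSet_le_fst_lt (hX : Measurable X) (hE : Measurable E) :
    MeasurableSet {p : ℝ × Ω | X p.2 ≤ p.1 ∧ p.1 < E p.2} :=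
  (measurableSet_le (hX.comp measurable_snd) measurable_fst).inter
    (measurableSet_lt measurable_fst (hE.comp measurable_snd))

theorem measureReal_le_eq_add_of_le [IsFiniteMeasure μ] (hX : Measurable X) (hE : Measurable E)
    (hle : ∀ ω, X ω ≤ E ω) (t : ℝ) :
    μ.real {ω | X ω ≤ t} = μ.real {ω | E ω ≤ t} + μ.real {ω | X ω ≤ t ∧ t < E ω} := by
  have hsplit : {ω | X ω ≤ t} = {ω | E ω ≤ t} ∪ {ω | X ω ≤ t ∧ t < E ω} := by
    ext ω
    constructor
    · intro h
      exact (le_or_gt (E ω) t).imp id fun h' => ⟨h, h'⟩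
    · rintro (h | ⟨h, _⟩)
      exacts [(hle ω).trans h, h]
  have hdisj : Disjoint {ω | E ω ≤ t} {ω | X ω ≤ t ∧ t < E ω} :=
    Set.disjoint_left.2 fun _ h h' => (not_le.2 h'.2) h
  rw [hsplit, measureReal_union hdisj
    ((measurableSet_le hX measurable_const).inter (measurableSet_lt measurable_const hE))]

theorem lintegral_measure_le_lt_eq_lintegral_ofReal_sub [SFinite μ] (hX : Measurable X)
    (hE : Measurable E) :
    ∫⁻ t, μ {ω | X ω ≤ t ∧ t < E ω} = ∫⁻ ω, ENNReal.ofReal (E ω - X ω) ∂μ :=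
  calc ∫⁻ t, μ {ω | X ω ≤ t ∧ t < E ω}
      = (volume.prod μ) {p : ℝ × Ω | X p.2 ≤ p.1 ∧ p.1 < E p.2} :=
        (Measure.prod_apply (measurableSet_le_fst_lt hX hE)).symm
    _ = ∫⁻ ω, volume (Set.Ico (X ω) (E ω)) ∂μ :=
        Measure.prod_apply_symm (measurableSet_le_fst_lt hX hE)
    _ = ∫⁻ ω, ENNReal.ofReal (E ω - X ω) ∂μ := by simp only [Real.volume_Ico]

theorem W1_eq_integral_sub_of_le [IsFiniteMeasure μ] (hX : Measurable X) (hE : Measurable E)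
    (hle : ∀ ω, X ω ≤ E ω) : W1 μ X E = ∫ ω, (E ω - X ω) ∂μ := by
  have hgap : ∀ t, |(μ {ω | X ω ≤ t}).toReal - (μ {ω | E ω ≤ t}).toReal|
      = (μ {ω | X ω ≤ t ∧ t < E ω}).toReal := fun t => by
    simp only [← measureReal_def, measureReal_le_eq_add_of_le hX hE hle t, add_sub_cancel_left,
      abs_of_nonneg measureReal_nonneg]
  calc W1 μ X E = ∫ t, (μ {ω | X ω ≤ t ∧ t < E ω}).toReal := integral_congr_ae (.of_forall hgap)
    _ = (∫⁻ t, μ {ω | X ω ≤ t ∧ t < E ω}).toReal :=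
        integral_toReal (measurable_measure_prodMk_left (measurableSet_le_fst_lt hX hE)).aemeasurable
          (.of_forall fun _ => measure_lt_top μ _)
    _ = (∫⁻ ω, ENNReal.ofReal (E ω - X ω) ∂μ).toReal := by
        rw [lintegral_measure_le_lt_eq_lintegral_ofReal_sub hX hE]
    _ = ∫ ω, (E ω - X ω) ∂μ :=
        (integral_eq_lintegral_of_nonneg_ae (.of_forall fun ω => sub_nonneg.2 (hle ω))
          (hE.sub hX).aestronglyMeasurable).symm

end

theorem causalScore_pos_iff_mean_lt_general
    {Ω : Type*} [MeasurableSpace Ω] (μ : Measure Ω) [IsProbabilityMeasure μ]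
    {d : ℕ} (hd : (Finset.univ : Finset (Fin d)).Nonempty)
    (E : Ω → ℝ) (U : Fin d → Ω → ℝ) (maxU : Ω → ℝ) (X : Fin d → Ω → ℝ)
    (hE : Measurable E) (hU : ∀ k, Measurable (U k))
    (hmaxU : ∀ ω, maxU ω = Finset.univ.sup' hd (fun k => U k ω))
    (hX : ∀ k ω, X k ω = E ω + U k ω - maxU ω)
    (hUint : ∀ k, Integrable (U k) μ) (hmaxUint : Integrable maxU μ)
    (i j : Fin d)
    (hpos : 0 < Finset.univ.sup' hd (fun k => W1 μ (X k) E)) :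
    0 < (W1 μ (X i) E - W1 μ (X j) E) / Finset.univ.sup' hd (fun k => W1 μ (X k) E)
      ↔ (∫ ω, U i ω ∂μ) < ∫ ω, U j ω ∂μ := by
  have hmaxU_meas : Measurable maxU := by
    have : maxU = Finset.univ.sup' hd U := funext fun ω => by rw [hmaxU, Finset.sup'_apply]
    exact this ▸ Finset.measurable_sup' hd fun k _ => hU k
  have hW1 : ∀ k, W1 μ (X k) E = (∫ ω, maxU ω ∂μ) - ∫ ω, U k ω ∂μ := fun k => by
    have hXk : X k = fun ω => E ω + U k ω - maxU ω := funext (hX k)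
    have hle : ∀ ω, X k ω ≤ E ω := fun ω => by
      have := Finset.le_sup' (fun m => U m ω) (Finset.mem_univ k)
      rw [hX, hmaxU]
      linarith
    rw [W1_eq_integral_sub_of_le (hXk ▸ (hE.add (hU k)).sub hmaxU_meas) hE hle,
      ← integral_sub hmaxUint (hUint k)]
    congr with ω
    rw [hX]
    ring
  rw [hW1 i, hW1 j, div_pos_iff_of_pos_right hpos, sub_pos, sub_lt_sub_iff_left]

/-- For the standard Pareto construction `X_j = E + U_j - max U`, the causal score
`s_{i→j}` is strictly positive iff `E[Uᵢ] < E[Uⱼ]`, provided the denominator is positive. -/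
theorem causalScore_pos_iff_mean_lt
    {Ω : Type*} [MeasurableSpace Ω] (μ : Measure Ω) [IsProbabilityMeasure μ]
    {d : ℕ} (hd : (Finset.univ : Finset (Fin d)).Nonempty)
    (E : Ω → ℝ) (U : Fin d → Ω → ℝ) (maxU : Ω → ℝ) (X : Fin d → Ω → ℝ)
    (hE : Measurable E) (hU : ∀ k, Measurable (U k))
    (hexp : ∀ t : ℝ, 0 ≤ t → μ {ω | t < E ω} = ENNReal.ofReal (Real.exp (-t)))
    (hindep : IndepFun E (fun ω => (fun k => U k ω)) μ)
    (hmaxU : ∀ ω, maxU ω = Finset.univ.sup' hd (fun k => U k ω))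
    (hX : ∀ k ω, X k ω = E ω + U k ω - maxU ω)
    (hUint : ∀ k, Integrable (U k) μ) (hmaxUint : Integrable maxU μ)
    (i j : Fin d)
    (hpos : 0 < Finset.univ.sup' hd (fun k => W1 μ (X k) E)) :
    0 < (W1 μ (X i) E - W1 μ (X j) E) / Finset.univ.sup' hd (fun k => W1 μ (X k) E)
      ↔ (∫ ω, U i ω ∂μ) < ∫ ω, U j ω ∂μ :=
  causalScore_pos_iff_mean_lt_general μ hd E U maxU X hE hU hmaxU hX hUint hmaxUint i j hpos
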